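/- Every character value χ(a) and χ(b), for χ an irreducible complex character of G, lies in the field generated over ℚ by the eigenvalues of x acting by left multiplication on ℂ[G×G]. -/

import Mathlib

/-!
The class sum `z = ∑ g, g⁻¹ t g` is central in `ℂ[G]`, so by Schur's lemma it acts on an
irreducible `V` as a scalar `c`, and taking traces gives `|G| χ(t) = c χ(1)`. Pulling `χ(·⁻¹)`
back along the projection `π : G × G → G` onto the factor where `t` sits gives an element
`y = ∑ p, χ(π p)⁻¹ p` of `ℂ[G × G]` with `x y = c y`, because `π` maps `x` onto `z`.
Hence `c` is an eigenvalue of `x` and `χ(t) = c χ(1) / |G|` lies in the field it generates.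
-/

open Module CategoryTheory

noncomputable def parkerX {G : Type*} [Group G] [Fintype G] (a b : G) :
    MonoidAlgebra ℂ (G × G) :=
  ∑ g : G, MonoidAlgebra.single (g⁻¹ * a * g, g⁻¹ * b * g) (1 : ℂ)

universe u

namespace FDRep

variable {k G : Type u} [Field k] [Group G] (V : FDRep k G)

theorem nontrivial_of_simple [Simple V] : Nontrivial V := by
  by_contra h
  rw [not_nontrivial_iff_subsingleton] at h
  refine id_nonzero V (Action.Hom.ext (FGModuleCat.hom_ext (LinearMap.ext fun v => ?_)))
  exact Subsingleton.elim _ _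

lemma sum_character_mul_eq_mul_character {ι : Type*} [Fintype ι] {s : ι → G} {c : k}
    (hc : ∑ i, V.ρ (s i) = c • 1) (u : G) :
    ∑ i, V.character (u * s i) = c * V.character u := by
  calc ∑ i, V.character (u * s i) = LinearMap.trace k V (V.ρ u * ∑ i, V.ρ (s i)) := by
        simp only [character, map_mul, Finset.mul_sum, map_sum]
    _ = c * V.character u := by simp [hc, character]

theorem hasEigenvalue_mulLeft_sum_single [CharZero k] [Nontrivial V] {H ι : Type*} [Group H]
    [Fintype H] [Fintype ι] (π : H →* G) (h : ι → H) {c : k} (hc : ∑ i, V.ρ (π (h i)) = c • 1) :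
    Module.End.HasEigenvalue (LinearMap.mulLeft k (∑ i, MonoidAlgebra.single (h i) (1 : k))) c := by
  let y : MonoidAlgebra k H :=
    .ofCoeff (Finsupp.equivFunOnFinite.symm fun p => V.character (π p)⁻¹)
  have hy (p : H) : y.coeff p = V.character (π p)⁻¹ := rfl
  refine Module.End.hasEigenvalue_of_hasEigenvector (x := y) ⟨?_, fun hy0 => ?_⟩
  · rw [Module.End.mem_eigenspace_iff, LinearMap.mulLeft_apply]
    ext q
    simp only [Finset.sum_mul, MonoidAlgebra.coeff_sum, Finsupp.finsetSum_apply,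
      MonoidAlgebra.coeff_single_mul_apply, one_mul, hy, map_mul, map_inv, mul_inv_rev, inv_inv,
      MonoidAlgebra.coeff_smul_apply, smul_eq_mul]
    exact sum_character_mul_eq_mul_character V hc _
  · have := congrArg (fun z => z.coeff 1) hy0
    simp only [hy, map_one, inv_one, char_one, MonoidAlgebra.coeff_zero, Finsupp.coe_zero,
      Pi.zero_apply, Nat.cast_eq_zero] at this
    exact finrank_pos.ne' this

variable [Fintype G]

lemma commute_sum_conj (t h : G) : Commute (∑ g : G, V.ρ (g⁻¹ * t * g)) (V.ρ h) := by
  rw [Commute, SemiconjBy, Finset.sum_mul, Finset.mul_sum]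
  refine Fintype.sum_equiv (Equiv.mulRight h) _ _ fun g => ?_
  simp only [Equiv.coe_mulRight, ← map_mul]
  congr 1
  group

lemma exists_sum_conj_eq_smul_one [IsAlgClosed k] [Simple V] (t : G) :
    ∃ c : k, ∑ g : G, V.ρ (g⁻¹ * t * g) = c • 1 := by
  let T : V ⟶ V := ⟨InducedCategory.homMk (ModuleCat.ofHom (∑ g : G, V.ρ (g⁻¹ * t * g))),
    fun h => by ext v; exact LinearMap.congr_fun (commute_sum_conj V t h) v⟩
  obtain ⟨c, hc⟩ := endomorphism_simple_eq_smul_id k T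
  exact ⟨c, (congrArg (fun f : V ⟶ V => f.hom.hom.hom) hc).symm⟩

lemma card_mul_character_eq {t : G} {c : k} (hc : ∑ g : G, V.ρ (g⁻¹ * t * g) = c • 1) :
    Fintype.card G * V.character t = c * finrank k V := by
  have hconj (g : G) : V.character (g⁻¹ * t * g) = V.character t := by
    simpa using V.char_conj t g⁻¹
  simpa [hconj] using sum_character_mul_eq_mul_character V hc 1

end FDRep

/-- every character value `χ(a)`, `χ(b)`, for `χ` an irreducible complex
character of `G`, lies in the field generated over `ℚ` by the eigenvalues of `x` acting
by left multiplication on `ℂ[G×G]`. -/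
theorem parker_stmt7 {G : Type} [Group G] [Fintype G] (a b : G)
    (V : FDRep ℂ G) (hV : CategoryTheory.Simple V) :
    V.character a ∈ IntermediateField.adjoin ℚ
        {μ : ℂ | Module.End.HasEigenvalue (LinearMap.mulLeft ℂ (parkerX a b)) μ} ∧
    V.character b ∈ IntermediateField.adjoin ℚ
        {μ : ℂ | Module.End.HasEigenvalue (LinearMap.mulLeft ℂ (parkerX a b)) μ} := by
  have := V.nontrivial_of_simple
  have key (π : G × G →* G) (t : G) (hπ : ∀ g, π (g⁻¹ * a * g, g⁻¹ * b * g) = g⁻¹ * t * g) :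
      V.character t ∈ IntermediateField.adjoin ℚ
        {μ : ℂ | Module.End.HasEigenvalue (LinearMap.mulLeft ℂ (parkerX a b)) μ} := by
    obtain ⟨c, hc⟩ := V.exists_sum_conj_eq_smul_one t
    have hev : Module.End.HasEigenvalue (LinearMap.mulLeft ℂ (parkerX a b)) c :=
      V.hasEigenvalue_mulLeft_sum_single π _ (by simpa only [hπ] using hc)
    have hcard : (Fintype.card G : ℂ) ≠ 0 := Nat.cast_ne_zero.mpr Fintype.card_ne_zero
    rw [eq_div_of_mul_eq hcard ((mul_comm _ _).trans (V.card_mul_character_eq hc))]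
    exact div_mem (mul_mem (IntermediateField.subset_adjoin ℚ _ hev) (natCast_mem _ _))
      (natCast_mem _ _)
  exact ⟨key (MonoidHom.fst G G) a fun _ => rfl, key (MonoidHom.snd G G) b fun _ => rfl⟩
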